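/- arXiv:2105.01005 — 2 statements merged into one kernel-verified Lean document; each statement's English description precedes it below -/
import Mathlib

section
/- For every m₀, γ₀, λ̄, L̄ > 0 there exist K, t₀, C > 0, depending only on n, m₀, γ₀, λ̄, L̄, with the following property. Set M := 1 + m₀ + γ₀, and let (F, F₀) satisfy (H0), (H1) with λ(M) ≥ λ̄ and be t-rescaled with L(M) ≤ L̄ for some 0 < t ≤ t₀. Then for every x₀ = (x₀', 0) ∈ B'_{1/2}, every m with |m| ≤ m₀ and every 0 < γ ≤ γ₀, the function η(x) = t(|x' − x₀'|² − K x_{n+1}²) + m x_{n+1} + γ satisfies max{‖η‖_{L∞(B_{1/2}(x₀))}, ‖∇η‖_{L∞(B_{1/2}(x₀))}} ≤ 1 + m₀ + γ, and H_t(η)(x) ≥ C·t and H_t(−η)(x) ≤ −C·t for all x ∈ B_{1/2}(x₀). -/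
open MeasureTheory Metric Filter
open scoped InnerProductSpace NNReal ENNReal Topology

noncomputable section

/-- Euclidean space `ℝ^{n+1}`. -/
abbrev Eucl (n : ℕ) : Type := EuclideanSpace ℝ (Fin (n + 1))

namespace TOP

variable {n : ℕ}

/-- The `(n+1)`-st standard basis vector `e_{n+1}`. -/
def eLast (n : ℕ) : Eucl n := EuclideanSpace.single (Fin.last n) 1

/-- Open upper half ball `B_r⁺(x₀)`. -/
def hBall (x₀ : Eucl n) (r : ℝ) : Set (Eucl n) :=
  Metric.ball x₀ r ∩ {x : Eucl n | 0 < x (Fin.last n)}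

/-- Open lower half ball `B_r⁻(x₀)`. -/
def hBallNeg (x₀ : Eucl n) (r : ℝ) : Set (Eucl n) :=
  Metric.ball x₀ r ∩ {x : Eucl n | x (Fin.last n) < 0}

/-- Thin ball `B_r'(x₀)`. -/
def tBall (x₀ : Eucl n) (r : ℝ) : Set (Eucl n) :=
  Metric.ball x₀ r ∩ {x : Eucl n | x (Fin.last n) = 0}

/-- (H0): `F` and `F₀` are of class `C¹` on `B₁ × ℝ × ℝ^{n+1}`. -/
def H0 (F : Eucl n → ℝ → Eucl n → Eucl n) (F₀ : Eucl n → ℝ → Eucl n → ℝ) : Prop :=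
  ContDiffOn ℝ 1 (fun q : Eucl n × ℝ × Eucl n => F q.1 q.2.1 q.2.2)
      (Metric.ball (0 : Eucl n) 1 ×ˢ (Set.univ : Set ℝ) ×ˢ (Set.univ : Set (Eucl n))) ∧
    ContDiffOn ℝ 1 (fun q : Eucl n × ℝ × Eucl n => F₀ q.1 q.2.1 q.2.2)
      (Metric.ball (0 : Eucl n) 1 ×ˢ (Set.univ : Set ℝ) ×ˢ (Set.univ : Set (Eucl n)))

/-- (H1): uniform ellipticity of `D_pF` on compact subsets. -/
def H1 (F : Eucl n → ℝ → Eucl n → Eucl n) : Prop :=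
  ∀ M : ℝ, 0 < M → ∃ lam : ℝ, 0 < lam ∧
    ∀ x ∈ Metric.ball (0 : Eucl n) 1, ∀ z : ℝ, |z| ≤ M → ∀ p : Eucl n, ‖p‖ ≤ M →
      ∀ ξ : Eucl n, lam * ‖ξ‖ ^ 2 ≤ ⟪fderiv ℝ (F x z) p ξ, ξ⟫_ℝ

/-- (H1) with a prescribed ellipticity function `lam : M ↦ λ(M)`. -/
def H1With (lam : ℝ → ℝ) (F : Eucl n → ℝ → Eucl n → Eucl n) : Prop :=
  ∀ M : ℝ, 0 < M → 0 < lam M ∧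
    ∀ x ∈ Metric.ball (0 : Eucl n) 1, ∀ z : ℝ, |z| ≤ M → ∀ p : Eucl n, ‖p‖ ≤ M →
      ∀ ξ : Eucl n, lam M * ‖ξ‖ ^ 2 ≤ ⟪fderiv ℝ (F x z) p ξ, ξ⟫_ℝ

/-- `div_x F (x, z, p) = ∑ᵢ ∂_{xᵢ} Fᵢ (x, z, p)`. -/
def divx (F : Eucl n → ℝ → Eucl n → Eucl n) (x : Eucl n) (z : ℝ) (p : Eucl n) : ℝ :=
  ∑ i : Fin (n + 1), fderiv ℝ (fun y : Eucl n => F y z p i) x (EuclideanSpace.single i 1)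

/-- `(F, F₀)` is `t`-rescaled with bound function `L : M ↦ L(M)`. -/
def Rescaled (t : ℝ) (L : ℝ → ℝ) (F : Eucl n → ℝ → Eucl n → Eucl n)
    (F₀ : Eucl n → ℝ → Eucl n → ℝ) : Prop :=
  ∀ M : ℝ, 0 < M → ∀ x ∈ Metric.ball (0 : Eucl n) 1, ∀ z : ℝ, |z| ≤ M →
    ∀ p : Eucl n, ‖p‖ ≤ M →
      |(- divx F x z p - ⟪deriv (fun s : ℝ => F x s p) z, p⟫_ℝ + F₀ x z p)| ≤ t * L M ∧
        ‖fderiv ℝ (F x z) p‖ ≤ L M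

/-- The operator `H_t` acting classically on a `C²` function `φ`:
`H_t(φ)(x) = −div_x F − ⟨∂_z F, ∇φ⟩ − tr(D_pF · D²φ) + F₀`, all evaluated at
`(x, φ(x), ∇φ(x))`. -/
def Hop (F : Eucl n → ℝ → Eucl n → Eucl n) (F₀ : Eucl n → ℝ → Eucl n → ℝ)
    (φ : Eucl n → ℝ) (x : Eucl n) : ℝ :=
  - divx F x (φ x) (gradient φ x)
    - ⟪deriv (fun s : ℝ => F x s (gradient φ x)) (φ x), gradient φ x⟫_ℝ
    - ∑ i : Fin (n + 1),
        ⟪fderiv ℝ (F x (φ x)) (gradient φ x)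
          (fderiv ℝ (gradient φ) x (EuclideanSpace.single i 1)), EuclideanSpace.single i 1⟫_ℝ
    + F₀ x (φ x) (gradient φ x)

/-- The admissible class `A_g` for the thin obstacle problem: `W^{1,∞}(B₁)` functions
with boundary value `g` on `∂B₁` which are nonnegative on `B₁'`. -/
def AdmissibleThin (g v : Eucl n → ℝ) : Prop :=
  (∃ C : ℝ≥0, LipschitzOnWith C v (Metric.closedBall (0 : Eucl n) 1)) ∧
    (∀ x ∈ Metric.sphere (0 : Eucl n) 1, v x = g x) ∧
    ∀ x ∈ tBall (0 : Eucl n) 1, 0 ≤ v x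

/-- A (Lipschitz) solution of the thin obstacle problem in `B₁`. -/
def ThinSolution (F : Eucl n → ℝ → Eucl n → Eucl n) (F₀ : Eucl n → ℝ → Eucl n → ℝ)
    (g u : Eucl n → ℝ) : Prop :=
  AdmissibleThin g u ∧
    ∀ v : Eucl n → ℝ, AdmissibleThin g v →
      0 ≤ ∫ x in Metric.ball (0 : Eucl n) 1,
        (⟪F x (u x) (gradient u x), gradient v x - gradient u x⟫_ℝ +
          F₀ x (u x) (gradient u x) * (v x - u x))

/-- The admissible class `A_g` for the boundary (Signorini) obstacle problem:
`W^{1,∞}(B₁⁺)` functions with boundary value `g` on `∂B₁⁺ ∖ B₁'` which are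
nonnegative on `B₁'`. -/
def AdmissibleBdry (g v : Eucl n → ℝ) : Prop :=
  (∃ C : ℝ≥0, LipschitzOnWith C v
      (Metric.closedBall (0 : Eucl n) 1 ∩ {x : Eucl n | 0 ≤ x (Fin.last n)})) ∧
    (∀ x : Eucl n, ‖x‖ = 1 → 0 ≤ x (Fin.last n) → v x = g x) ∧
    ∀ x ∈ tBall (0 : Eucl n) 1, 0 ≤ v x

/-- A (Lipschitz) solution of the boundary (Signorini) obstacle problem in `B₁⁺`. -/
def BdrySolution (F : Eucl n → ℝ → Eucl n → Eucl n) (F₀ : Eucl n → ℝ → Eucl n → ℝ)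
    (g u : Eucl n → ℝ) : Prop :=
  AdmissibleBdry g u ∧
    ∀ v : Eucl n → ℝ, AdmissibleBdry g v →
      0 ≤ ∫ x in hBall (0 : Eucl n) 1,
        (⟪F x (u x) (gradient u x), gradient v x - gradient u x⟫_ℝ +
          F₀ x (u x) (gradient u x) * (v x - u x))

/-- The coincidence set `Λ(u) = {x ∈ B₁' : u(x) = 0}`. -/
def coincidenceSet (u : Eucl n → ℝ) : Set (Eucl n) :=
  {x ∈ tBall (0 : Eucl n) 1 | u x = 0}

/-- The free boundary `Γ(u)`: the boundary of `Λ(u)` in the relative topology of `B₁'`. -/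
def freeBoundary (u : Eucl n → ℝ) : Set (Eucl n) :=
  {x ∈ coincidenceSet u |
    ∀ r : ℝ, 0 < r → ∃ y ∈ tBall (0 : Eucl n) 1, y ∈ Metric.ball x r ∧ 0 < u y}

/-- `w` satisfies the Caccioppoli inequality with constant `Q` at `x₀ ∈ B₁'`. -/
def CaccAt (w : Eucl n → ℝ) (Q : ℝ) (x₀ : Eucl n) : Prop :=
  ∀ k : ℝ, 0 ≤ k → ∀ r R : ℝ, 0 < r → r < R → R < 1 - ‖x₀‖ →
    (∫ x in ({x : Eucl n | k ≤ w x} ∩ hBall x₀ r), ‖gradient w x‖ ^ 2) ≤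
      Q / (R - r) ^ 2 * (∫ x in ({x : Eucl n | k ≤ w x} ∩ hBall x₀ R), (w x - k) ^ 2) +
        Q * (volume ({x : Eucl n | k ≤ w x} ∩ hBall x₀ R)).toReal

/-- Difference quotient `D_e^h w (x) = (w(x + h e) − w(x))/h`. -/
def diffQuot (h : ℝ) (e : Eucl n) (w : Eucl n → ℝ) (x : Eucl n) : ℝ :=
  (w (x + h • e) - w x) / h

/-- The barrier function `η(x) = t(|x' − x₀'|² − K x_{n+1}²) + m x_{n+1} + γ`. -/
def etaFn (x₀ : Eucl n) (t K m γ : ℝ) (x : Eucl n) : ℝ :=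
  t * ((∑ i : Fin n, (x i.castSucc - x₀ i.castSucc) ^ 2) - K * (x (Fin.last n)) ^ 2) +
    m * x (Fin.last n) + γ

end TOP


namespace BarrierAux

open TOP

variable {n : ℕ}

lemma single_castSucc_last (j : Fin n) :
    (EuclideanSpace.single j.castSucc (1:ℝ)) (Fin.last n) = 0 := by
  rw [EuclideanSpace.single_apply, if_neg (Fin.castSucc_lt_last j).ne']

lemma eta_inner (x₀ : Eucl n) (h₀ : x₀ (Fin.last n) = 0) (t K m γ : ℝ) (x : Eucl n) :
    etaFn x₀ t K m γ x =
      t * ⟪x - x₀, x - x₀⟫_ℝ - t * (1 + K) * (x (Fin.last n) * x (Fin.last n))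
        + m * x (Fin.last n) + γ := by
  have h : ⟪x - x₀, x - x₀⟫_ℝ = ∑ i : Fin (n+1), (x i - x₀ i)^2 := by
    rw [PiLp.inner_apply]; simp [RCLike.inner_apply, sq]
  rw [h, Fin.sum_univ_castSucc, etaFn, h₀]
  ring

/-- gradient vector of the barrier. -/
def gVec (x₀ : Eucl n) (t K m : ℝ) (x : Eucl n) : Eucl n :=
  (2*t) • (x - x₀) + (m - 2*t*(1+K) * x (Fin.last n)) • eLast n

lemma hasGradientAt_eta (x₀ : Eucl n) (h₀ : x₀ (Fin.last n) = 0) (t K m γ : ℝ) (x : Eucl n) :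
    HasGradientAt (etaFn x₀ t K m γ) (gVec x₀ t K m x) x := by
  rw [hasGradientAt_iff_hasFDerivAt]
  have hf : etaFn x₀ t K m γ = fun y : Eucl n =>
      t * ⟪y - x₀, y - x₀⟫_ℝ - t * (1 + K) * (y (Fin.last n) * y (Fin.last n))
        + m * y (Fin.last n) + γ := funext (eta_inner x₀ h₀ t K m γ)
  rw [hf]
  have hid : HasFDerivAt (fun y : Eucl n => y - x₀) (ContinuousLinearMap.id ℝ (Eucl n)) x := by
    simpa using (hasFDerivAt_id x).sub_const x₀
  have hproj : HasFDerivAt (fun y : Eucl n => y (Fin.last n))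
      (EuclideanSpace.proj (Fin.last n) : Eucl n →L[ℝ] ℝ) x :=
    (EuclideanSpace.proj (Fin.last n) : Eucl n →L[ℝ] ℝ).hasFDerivAt
  have h := ((((hid.inner ℝ hid).const_mul t).sub
      ((hproj.mul hproj).const_mul (t*(1+K)))).add (hproj.const_mul m)).add_const γ
  refine h.congr_fderiv ?_
  ext v
  simp only [InnerProductSpace.toDual_apply_apply, gVec, eLast, inner_add_left,
    real_inner_smul_left, EuclideanSpace.inner_single_left, conj_trivial, one_mul,
    ContinuousLinearMap.add_apply, ContinuousLinearMap.sub_apply,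
    ContinuousLinearMap.coe_smul', Pi.smul_apply, ContinuousLinearMap.comp_apply,
    ContinuousLinearMap.prod_apply, ContinuousLinearMap.coe_id, id_eq,
    fderivInnerCLM_apply, smul_eq_mul, PiLp.proj_apply, ContinuousLinearMap.id_apply,
    real_inner_comm v (x - x₀)]
  ring

lemma gradient_eta_eq (x₀ : Eucl n) (h₀ : x₀ (Fin.last n) = 0) (t K m γ : ℝ) :
    gradient (etaFn x₀ t K m γ) = fun x => gVec x₀ t K m x :=
  funext fun x => (hasGradientAt_eta x₀ h₀ t K m γ x).gradient

/-- Hessian of the barrier, as a continuous linear map. -/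
def AMat (n : ℕ) (t K : ℝ) : Eucl n →L[ℝ] Eucl n :=
  (2*t) • ContinuousLinearMap.id ℝ (Eucl n) +
    (EuclideanSpace.proj (Fin.last n) : Eucl n →L[ℝ] ℝ).smulRight ((-(2*t*(1+K))) • eLast n)

lemma gVec_affine (x₀ : Eucl n) (t K m : ℝ) :
    (fun x => gVec x₀ t K m x) =
      fun x : Eucl n => AMat n t K x + (m • eLast n - (2*t) • x₀) := by
  funext x
  simp only [gVec, AMat, ContinuousLinearMap.add_apply, ContinuousLinearMap.coe_smul',
    Pi.smul_apply, ContinuousLinearMap.id_apply, ContinuousLinearMap.smulRight_apply,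
    PiLp.proj_apply]
  rw [smul_smul, sub_smul, smul_sub]
  module

lemma fderiv_gradient_eta (x₀ : Eucl n) (h₀ : x₀ (Fin.last n) = 0) (t K m γ : ℝ) (x : Eucl n) :
    fderiv ℝ (gradient (etaFn x₀ t K m γ)) x = AMat n t K := by
  rw [gradient_eta_eq x₀ h₀ t K m γ, gVec_affine]
  exact (((AMat n t K).hasFDerivAt).add_const _).fderiv

lemma AMat_castSucc (t K : ℝ) (j : Fin n) :
    AMat n t K (EuclideanSpace.single j.castSucc (1:ℝ)) =
      (2*t) • EuclideanSpace.single j.castSucc (1:ℝ) := by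
  simp only [AMat, ContinuousLinearMap.add_apply, ContinuousLinearMap.coe_smul',
    Pi.smul_apply, ContinuousLinearMap.id_apply, ContinuousLinearMap.smulRight_apply,
    PiLp.proj_apply, single_castSucc_last j, zero_smul, add_zero]

lemma AMat_last (t K : ℝ) :
    AMat n t K (eLast n) = (-(2*t*K)) • eLast n := by
  have h1 : (eLast n) (Fin.last n) = 1 := by
    simp [eLast, EuclideanSpace.single_apply]
  simp only [AMat, ContinuousLinearMap.add_apply, ContinuousLinearMap.coe_smul',
    Pi.smul_apply, ContinuousLinearMap.id_apply, ContinuousLinearMap.smulRight_apply,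
    PiLp.proj_apply, h1, one_smul, smul_smul]
  rw [← add_smul]
  ring_nf

lemma hop_eta (F : Eucl n → ℝ → Eucl n → Eucl n) (F₀ : Eucl n → ℝ → Eucl n → ℝ)
    (x₀ : Eucl n) (h₀ : x₀ (Fin.last n) = 0) (t K m γ : ℝ) (x : Eucl n) :
    Hop F F₀ (etaFn x₀ t K m γ) x =
      (- divx F x (etaFn x₀ t K m γ x) (gVec x₀ t K m x)
        - ⟪deriv (fun s : ℝ => F x s (gVec x₀ t K m x)) (etaFn x₀ t K m γ x),
            gVec x₀ t K m x⟫_ℝ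
        + F₀ x (etaFn x₀ t K m γ x) (gVec x₀ t K m x))
      - ((2*t) * ∑ j : Fin n,
            ⟪fderiv ℝ (F x (etaFn x₀ t K m γ x)) (gVec x₀ t K m x)
              (EuclideanSpace.single j.castSucc 1), EuclideanSpace.single j.castSucc 1⟫_ℝ
          - (2*t*K) * ⟪fderiv ℝ (F x (etaFn x₀ t K m γ x)) (gVec x₀ t K m x) (eLast n),
              eLast n⟫_ℝ) := by
  unfold Hop
  rw [fderiv_gradient_eta x₀ h₀ t K m γ x, gradient_eta_eq x₀ h₀ t K m γ]
  simp only []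
  rw [Fin.sum_univ_castSucc,
    show (EuclideanSpace.single (Fin.last n) (1:ℝ)) = eLast n from rfl, AMat_last,
    Finset.mul_sum]
  simp only [AMat_castSucc, ContinuousLinearMap.map_smul, real_inner_smul_left]
  ring

lemma norm_eLast : ‖eLast n‖ = 1 := by
  simp [eLast, EuclideanSpace.norm_single]

lemma abs_last_le (x x₀ : Eucl n) (h₀ : x₀ (Fin.last n) = 0) :
    |x (Fin.last n)| ≤ ‖x - x₀‖ := by
  have h1 : ⟪eLast n, x - x₀⟫_ℝ = x (Fin.last n) := by
    simp [eLast, EuclideanSpace.inner_single_left, h₀]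
  calc |x (Fin.last n)| = |⟪eLast n, x - x₀⟫_ℝ| := by rw [h1]
    _ ≤ ‖eLast n‖ * ‖x - x₀‖ := abs_real_inner_le_norm _ _
    _ = ‖x - x₀‖ := by rw [norm_eLast, one_mul]

lemma gVec_norm_le (x₀ : Eucl n) (h₀ : x₀ (Fin.last n) = 0) (t K m : ℝ)
    (hK : 0 ≤ K) (ht : 0 ≤ t) (x : Eucl n) (hx : ‖x - x₀‖ ≤ 1/2) :
    ‖gVec x₀ t K m x‖ ≤ |m| + t*(2+K) := by
  have hl : |x (Fin.last n)| ≤ 1/2 := (abs_last_le x x₀ h₀).trans hx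
  calc ‖gVec x₀ t K m x‖
      ≤ ‖(2*t) • (x - x₀)‖ + ‖(m - 2*t*(1+K) * x (Fin.last n)) • eLast n‖ :=
        norm_add_le _ _
    _ = |2*t| * ‖x - x₀‖ + |m - 2*t*(1+K) * x (Fin.last n)| * 1 := by
        rw [norm_smul, norm_smul, norm_eLast, Real.norm_eq_abs, Real.norm_eq_abs]
    _ ≤ |m| + t*(2+K) := by
        have h2 : |m - 2*t*(1+K) * x (Fin.last n)| ≤ |m| + 2*t*(1+K) * |x (Fin.last n)| := by
          rw [show 2*t*(1+K) * |x (Fin.last n)| = |2*t*(1+K) * x (Fin.last n)| by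
            rw [abs_mul, abs_of_nonneg (by positivity : (0:ℝ) ≤ 2*t*(1+K))]]
          exact abs_sub _ _
        have h3 : |2*t| = 2*t := abs_of_nonneg (by positivity)
        have h4 : (2*t) * ‖x - x₀‖ ≤ (2*t) * (1/2) :=
          mul_le_mul_of_nonneg_left hx (by positivity)
        have h5 : (2*t*(1+K)) * |x (Fin.last n)| ≤ (2*t*(1+K)) * (1/2) :=
          mul_le_mul_of_nonneg_left hl (by positivity)
        nlinarith

lemma eta_abs_le (x₀ : Eucl n) (h₀ : x₀ (Fin.last n) = 0) (t K m γ : ℝ)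
    (hK : 0 ≤ K) (ht : 0 ≤ t) (x : Eucl n) (hx : ‖x - x₀‖ ≤ 1/2) :
    |etaFn x₀ t K m γ x| ≤ t*(2+K)/4 + |m|/2 + |γ| := by
  rw [eta_inner x₀ h₀ t K m γ x, real_inner_self_eq_norm_sq]
  have hl : |x (Fin.last n)| ≤ 1/2 := (abs_last_le x x₀ h₀).trans hx
  have hn : (0:ℝ) ≤ ‖x - x₀‖ := norm_nonneg _
  have habs := abs_nonneg (x (Fin.last n))
  have hsq : x (Fin.last n) * x (Fin.last n) = |x (Fin.last n)| * |x (Fin.last n)| :=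
    (abs_mul_abs_self _).symm
  have hA1 : t * ‖x - x₀‖^2 ≤ t * (1/4) :=
    mul_le_mul_of_nonneg_left (by nlinarith) ht
  have hA0 : (0:ℝ) ≤ t * ‖x - x₀‖^2 := by positivity
  have hB1 : t*(1+K) * (x (Fin.last n) * x (Fin.last n)) ≤ t*(1+K) * (1/4) :=
    mul_le_mul_of_nonneg_left (by nlinarith [abs_nonneg (x (Fin.last n))]) (by positivity)
  have hB0 : (0:ℝ) ≤ t*(1+K) * (x (Fin.last n) * x (Fin.last n)) :=
    mul_nonneg (by positivity) (mul_self_nonneg _)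
  have hm1 : |m * x (Fin.last n)| ≤ |m| * (1/2) := by
    rw [abs_mul]
    exact mul_le_mul_of_nonneg_left hl (abs_nonneg m)
  rw [abs_le] at hm1
  have hg1 : -|γ| ≤ γ := neg_abs_le γ
  have hg2 : γ ≤ |γ| := le_abs_self γ
  rw [abs_le]
  constructor <;> linarith

lemma etaFn_neg (x₀ : Eucl n) (t K m γ : ℝ) :
    (fun y : Eucl n => -(etaFn x₀ t K m γ y)) = etaFn x₀ (-t) K (-m) (-γ) := by
  funext y; simp only [etaFn]; ring

lemma gVec_neg (x₀ : Eucl n) (t K m : ℝ) (x : Eucl n) :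
    gVec x₀ (-t) K (-m) x = -(gVec x₀ t K m x) := by
  simp only [gVec]
  module

end BarrierAux

open BarrierAux

open TOP in
/-- Lemma: construction of barriers. For every `m₀, γ₀, λ̄, L̄ > 0`
there are `K, t₀, C > 0`, depending only on `n, m₀, γ₀, λ̄, L̄`, such that for every
`t`-rescaled datum (`0 < t ≤ t₀`, `M := 1 + m₀ + γ₀`, `λ(M) ≥ λ̄`, `L(M) ≤ L̄`),
every `x₀ ∈ B'_{1/2}`, `|m| ≤ m₀` and `0 < γ ≤ γ₀`, the quadratic barrier
`η(x) = t(|x'−x₀'|² − K x_{n+1}²) + m x_{n+1} + γ` satisfies the stated `L^∞` bounds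
and `H_t(η) ≥ C t`, `H_t(−η) ≤ −C t` on `B_{1/2}(x₀)`. -/
theorem barrier_construction (n : ℕ) (m₀ γ₀ lamBar LBar : ℝ)
    (hm₀ : 0 < m₀) (hγ₀ : 0 < γ₀) (hlamBar : 0 < lamBar) (hLBar : 0 < LBar) :
    ∃ K t₀ C : ℝ, 0 < K ∧ 0 < t₀ ∧ 0 < C ∧
      ∀ (F : Eucl n → ℝ → Eucl n → Eucl n) (F₀ : Eucl n → ℝ → Eucl n → ℝ) (t : ℝ),
        0 < t → t ≤ t₀ → H0 F F₀ → H1 F →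
        -- `λ(M) ≥ λ̄` at `M = 1 + m₀ + γ₀`:
        (∀ x ∈ Metric.ball (0 : Eucl n) 1, ∀ z : ℝ, |z| ≤ 1 + m₀ + γ₀ →
          ∀ p : Eucl n, ‖p‖ ≤ 1 + m₀ + γ₀ → ∀ ξ : Eucl n,
            lamBar * ‖ξ‖ ^ 2 ≤ ⟪fderiv ℝ (F x z) p ξ, ξ⟫_ℝ) →
        -- `(F, F₀)` is `t`-rescaled with `L(M) ≤ L̄` at `M = 1 + m₀ + γ₀`:
        (∀ x ∈ Metric.ball (0 : Eucl n) 1, ∀ z : ℝ, |z| ≤ 1 + m₀ + γ₀ →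
          ∀ p : Eucl n, ‖p‖ ≤ 1 + m₀ + γ₀ →
            |(- divx F x z p - ⟪deriv (fun s : ℝ => F x s p) z, p⟫_ℝ + F₀ x z p)| ≤
              t * LBar ∧ ‖fderiv ℝ (F x z) p‖ ≤ LBar) →
        ∀ x₀ ∈ tBall (0 : Eucl n) (1 / 2), ∀ m : ℝ, |m| ≤ m₀ →
          ∀ γ : ℝ, 0 < γ → γ ≤ γ₀ →
            (∀ x ∈ Metric.ball x₀ (1 / 2),
              |etaFn x₀ t K m γ x| ≤ 1 + m₀ + γ ∧
              ‖gradient (etaFn x₀ t K m γ) x‖ ≤ 1 + m₀ + γ) ∧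
            ∀ x ∈ Metric.ball x₀ (1 / 2),
              C * t ≤ Hop F F₀ (etaFn x₀ t K m γ) x ∧
              Hop F F₀ (fun y : Eucl n => -(etaFn x₀ t K m γ y)) x ≤ -(C * t) := by
  set Kc : ℝ := (1 + LBar + 2*(n:ℝ)*LBar) / (2*lamBar) with hKdef
  have hnum : (0:ℝ) < 1 + LBar + 2*(n:ℝ)*LBar := by positivity
  have hKpos : 0 < Kc := by rw [hKdef]; positivity
  have hKlam : 2 * Kc * lamBar = 1 + LBar + 2*(n:ℝ)*LBar := by
    rw [hKdef]; field_simp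
  refine ⟨Kc, 1/(2*(1+Kc)), 1, hKpos, by positivity, one_pos, ?_⟩
  intro F F₀ t ht htle _hH0 _hH1 hEll hResc x₀ hx₀ m hm γ hγ hγ0
  have h₀ : x₀ (Fin.last n) = 0 := hx₀.2
  have hx₀n : ‖x₀‖ < 1/2 := mem_ball_zero_iff.mp hx₀.1
  have ht2K : t * (2+Kc) ≤ 1 := by
    have h1 : t * (2*(1+Kc)) ≤ 1 := by
      rw [show t * (2*(1+Kc)) = (2*(1+Kc)) * t by ring]
      rw [le_div_iff₀ (by positivity)] at htle
      · linarith
    nlinarith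
  constructor
  · intro x hx
    have hxd : ‖x - x₀‖ < 1/2 := mem_ball_iff_norm.mp hx
    have hzabs := eta_abs_le x₀ h₀ t Kc m γ hKpos.le ht.le x hxd.le
    have hγabs : |γ| = γ := abs_of_pos hγ
    refine ⟨by rw [hγabs] at hzabs; linarith, ?_⟩
    rw [(hasGradientAt_eta x₀ h₀ t Kc m γ x).gradient]
    have hp := gVec_norm_le x₀ h₀ t Kc m hKpos.le ht.le x hxd.le
    linarith
  · intro x hx
    have hxd : ‖x - x₀‖ < 1/2 := mem_ball_iff_norm.mp hx
    have hxB : x ∈ Metric.ball (0 : Eucl n) 1 := by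
      rw [mem_ball_zero_iff]
      calc ‖x‖ = ‖x - x₀ + x₀‖ := by rw [sub_add_cancel]
        _ ≤ ‖x - x₀‖ + ‖x₀‖ := norm_add_le _ _
        _ < 1 := by linarith
    have hγabs : |γ| = γ := abs_of_pos hγ
    have hzabs := eta_abs_le x₀ h₀ t Kc m γ hKpos.le ht.le x hxd.le
    have hzM : |etaFn x₀ t Kc m γ x| ≤ 1 + m₀ + γ₀ := by
      rw [hγabs] at hzabs; linarith
    have hpM : ‖gVec x₀ t Kc m x‖ ≤ 1 + m₀ + γ₀ := by
      have hp := gVec_norm_le x₀ h₀ t Kc m hKpos.le ht.le x hxd.le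
      linarith
    -- bounds on the diagonal entries of D_pF
    have hq : ∀ (z : ℝ), |z| ≤ 1 + m₀ + γ₀ → ∀ (p : Eucl n), ‖p‖ ≤ 1 + m₀ + γ₀ →
        ∀ i : Fin (n+1),
        lamBar ≤ ⟪fderiv ℝ (F x z) p (EuclideanSpace.single i 1),
            EuclideanSpace.single i 1⟫_ℝ ∧
          ⟪fderiv ℝ (F x z) p (EuclideanSpace.single i 1),
            EuclideanSpace.single i 1⟫_ℝ ≤ LBar := by
      intro z hz p hp i
      have hni : ‖EuclideanSpace.single i (1:ℝ)‖ = 1 := by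
        rw [EuclideanSpace.norm_single, norm_one]
      constructor
      · have h1 := hEll x hxB z hz p hp (EuclideanSpace.single i 1)
        rw [hni] at h1; simpa using h1
      · have h1 := real_inner_le_norm (fderiv ℝ (F x z) p (EuclideanSpace.single i 1))
          (EuclideanSpace.single i (1:ℝ))
        have h2 := (fderiv ℝ (F x z) p).le_opNorm (EuclideanSpace.single i (1:ℝ))
        have h3 := (hResc x hxB z hz p hp).2
        rw [hni] at h1 h2
        rw [mul_one] at h1 h2
        exact h1.trans (h2.trans h3)
    have hSum : ∀ (z : ℝ), |z| ≤ 1 + m₀ + γ₀ → ∀ (p : Eucl n), ‖p‖ ≤ 1 + m₀ + γ₀ →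
        (∑ j : Fin n, ⟪fderiv ℝ (F x z) p (EuclideanSpace.single j.castSucc 1),
            EuclideanSpace.single j.castSucc 1⟫_ℝ) ≤ (n:ℝ) * LBar := by
      intro z hz p hp
      calc (∑ j : Fin n, ⟪fderiv ℝ (F x z) p (EuclideanSpace.single j.castSucc 1),
            EuclideanSpace.single j.castSucc 1⟫_ℝ) ≤ ∑ _j : Fin n, LBar :=
          Finset.sum_le_sum (fun j _ => (hq z hz p hp j.castSucc).2)
        _ = (n:ℝ) * LBar := by
          rw [Finset.sum_const, Finset.card_univ, Fintype.card_fin, nsmul_eq_mul]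
    constructor
    · -- lower bound for Hop(η)
      rw [hop_eta F F₀ x₀ h₀ t Kc m γ x]
      obtain ⟨hE, _⟩ := hResc x hxB _ hzM _ hpM
      have hE1 := (abs_le.mp hE).1
      have h4 : (2*t) * (∑ j : Fin n,
          ⟪fderiv ℝ (F x (etaFn x₀ t Kc m γ x)) (gVec x₀ t Kc m x)
            (EuclideanSpace.single j.castSucc 1), EuclideanSpace.single j.castSucc 1⟫_ℝ)
          ≤ (2*t) * ((n:ℝ) * LBar) :=
        mul_le_mul_of_nonneg_left (hSum _ hzM _ hpM) (by positivity)
      have h5 : (2*t*Kc) * lamBar ≤ (2*t*Kc) *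
          ⟪fderiv ℝ (F x (etaFn x₀ t Kc m γ x)) (gVec x₀ t Kc m x) (eLast n), eLast n⟫_ℝ :=
        mul_le_mul_of_nonneg_left ((hq _ hzM _ hpM (Fin.last n)).1) (by positivity)
      have h6 : (2*t*Kc) * lamBar = t * (1 + LBar + 2*(n:ℝ)*LBar) := by
        rw [show (2*t*Kc) * lamBar = t * (2 * Kc * lamBar) by ring, hKlam]
      linarith
    · -- upper bound for Hop(−η)
      rw [etaFn_neg x₀ t Kc m γ, hop_eta F F₀ x₀ h₀ (-t) Kc (-m) (-γ) x]
      have hz'eq : etaFn x₀ (-t) Kc (-m) (-γ) x = -(etaFn x₀ t Kc m γ x) :=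
        (congrFun (etaFn_neg x₀ t Kc m γ) x).symm
      have hp'eq : gVec x₀ (-t) Kc (-m) x = -(gVec x₀ t Kc m x) := gVec_neg x₀ t Kc m x
      have hz'M : |etaFn x₀ (-t) Kc (-m) (-γ) x| ≤ 1 + m₀ + γ₀ := by
        rw [hz'eq, abs_neg]; exact hzM
      have hp'M : ‖gVec x₀ (-t) Kc (-m) x‖ ≤ 1 + m₀ + γ₀ := by
        rw [hp'eq, norm_neg]; exact hpM
      obtain ⟨hE, _⟩ := hResc x hxB _ hz'M _ hp'M
      have hE1 := (abs_le.mp hE).2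
      have h4 : (2*t) * (∑ j : Fin n,
          ⟪fderiv ℝ (F x (etaFn x₀ (-t) Kc (-m) (-γ) x)) (gVec x₀ (-t) Kc (-m) x)
            (EuclideanSpace.single j.castSucc 1), EuclideanSpace.single j.castSucc 1⟫_ℝ)
          ≤ (2*t) * ((n:ℝ) * LBar) :=
        mul_le_mul_of_nonneg_left (hSum _ hz'M _ hp'M) (by positivity)
      have h5 : (2*t*Kc) * lamBar ≤ (2*t*Kc) *
          ⟪fderiv ℝ (F x (etaFn x₀ (-t) Kc (-m) (-γ) x)) (gVec x₀ (-t) Kc (-m) x)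
            (eLast n), eLast n⟫_ℝ :=
        mul_le_mul_of_nonneg_left ((hq _ hz'M _ hp'M (Fin.last n)).1) (by positivity)
      have h6 : (2*t*Kc) * lamBar = t * (1 + LBar + 2*(n:ℝ)*LBar) := by
        rw [show (2*t*Kc) * lamBar = t * (2 * Kc * lamBar) by ring, hKlam]
      linarith
end
end

section
/- Let u ∈ A_g (the admissible class of the boundary obstacle problem on B₁⁺) and let φ ∈ W^{1,∞}(B₁⁺) with supp φ ⊂ B_r⁺(x₀) ∪ B_r'(x₀) for some x₀ ∈ B₁' and 0 < r < 1 − |x₀|. Then for every 0 < h < (1 − |x₀| − r)/2 and every k ≥ 0 there exists ε₀ > 0, depending only on h and ‖φ‖_∞, such that for every i ∈ {1, …, n} and every ε ∈ (0, ε₀), the function v := u + ε·D_i^{−h}(φ²·(D_i^h u − k)₊) belongs to A_g, where D_i^h w(x) := (w(x + h·e_i) − w(x))/h is the difference quotient in the i-th direction and s₊ := max{s, 0}. -/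
open MeasureTheory Metric Filter
open scoped InnerProductSpace NNReal ENNReal Topology

noncomputable section

set_option maxHeartbeats 2000000 in
open TOP in
/-- Lemma: admissible competitors via difference quotients. If
`u ∈ A_g` and `φ ∈ W^{1,∞}(B₁⁺)` has support in `B_r⁺(x₀) ∪ B_r'(x₀)`, then for every
`0 < h < (1 − |x₀| − r)/2` and `k ≥ 0` there is `ε₀ > 0` such that
`u + ε D_i^{−h}(φ² (D_i^h u − k)₊) ∈ A_g` for every tangential direction `i` and every
`ε ∈ (0, ε₀)`. -/
theorem difference_quotient_competitor {n : ℕ}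
    (g u φ : Eucl n → ℝ) (x₀ : Eucl n) (r : ℝ)
    (hu : AdmissibleBdry g u)
    (hφ : ∃ C : ℝ≥0, LipschitzWith C φ)
    (hx₀ : x₀ ∈ tBall (0 : Eucl n) 1) (hr : 0 < r) (hrr : r < 1 - ‖x₀‖)
    (hsupp : Function.support φ ⊆ hBall x₀ r ∪ tBall x₀ r) :
    ∀ h : ℝ, 0 < h → h < (1 - ‖x₀‖ - r) / 2 → ∀ k : ℝ, 0 ≤ k →
      ∃ ε₀ : ℝ, 0 < ε₀ ∧ ∀ i : Fin n, ∀ ε : ℝ, 0 < ε → ε < ε₀ →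
        AdmissibleBdry g (fun x : Eucl n =>
          u x + ε * diffQuot (-h) (EuclideanSpace.single i.castSucc 1)
            (fun y : Eucl n => (φ y) ^ 2 *
              max (diffQuot h (EuclideanSpace.single i.castSucc 1) u y - k) 0) x) := by
  intro h hh hh2 k hk
  obtain ⟨⟨Cu, hCu⟩, hug, hu0⟩ := hu
  obtain ⟨Cφ, hCφ⟩ := hφ
  obtain ⟨hx₀b, hx₀last⟩ := hx₀
  have hx₀l : x₀ (Fin.last n) = 0 := hx₀last
  have hx₀norm : ‖x₀‖ < 1 := by rwa [mem_ball, dist_zero_right] at hx₀b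
  have hCu0 : (0:ℝ) ≤ Cu := Cu.coe_nonneg
  have hCφ0 : (0:ℝ) ≤ Cφ := Cφ.coe_nonneg
  have hhalf : h < 1 - ‖x₀‖ - r := by linarith
  obtain ⟨Mφ, hMφdef⟩ : ∃ M : ℝ, M = 3 * (Cφ:ℝ) * r := ⟨_, rfl⟩
  have hMφ0 : 0 ≤ Mφ := by rw [hMφdef]; positivity
  have hφsup : ∀ z : Eucl n, φ z ≠ 0 → dist z x₀ < r ∧ 0 ≤ z (Fin.last n) := by
    intro z hz
    rcases hsupp (Function.mem_support.mpr hz) with h1 | h1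
    · exact ⟨mem_ball.mp h1.1, le_of_lt h1.2⟩
    · exact ⟨mem_ball.mp h1.1, le_of_eq h1.2.symm⟩
  have hφbd : ∀ z : Eucl n, |φ z| ≤ Mφ := by
    intro z
    by_cases hz : φ z = 0
    · simp [hz, hMφ0]
    · have hzb := (hφsup z hz).1
      set p : Eucl n := x₀ - (2*r) • eLast n with hp
      have hφp : φ p = 0 := by
        by_contra hpne
        have h2 := (hφsup p hpne).2
        have h3 : p (Fin.last n) = -(2*r) := by
          simp [hp, eLast, EuclideanSpace.single_apply, hx₀l]
        rw [h3] at h2; linarith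
      have heL : ‖eLast n‖ = 1 := by simp [eLast]
      have hd1 : dist x₀ p = 2*r := by
        rw [hp, dist_self_sub_right, norm_smul, Real.norm_eq_abs,
          abs_of_pos (by linarith : (0:ℝ) < 2*r), heL, mul_one]
      have hdzp : dist z p ≤ 3 * r :=
        calc dist z p ≤ dist z x₀ + dist x₀ p := dist_triangle _ _ _
          _ ≤ r + 2*r := by rw [hd1]; linarith
          _ = 3*r := by ring
      have hlip := hCφ.dist_le_mul z p
      rw [Real.dist_eq] at hlip
      calc |φ z| = |φ z - φ p| := by rw [hφp, sub_zero]
        _ ≤ Cφ * dist z p := hlip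
        _ ≤ Cφ * (3*r) := mul_le_mul_of_nonneg_left hdzp hCφ0
        _ = Mφ := by rw [hMφdef]; ring
  refine ⟨h^2 / (Mφ^2 + 1), div_pos (pow_pos hh 2) (by positivity), ?_⟩
  intro i ε hε hεlt
  set e : Eucl n := EuclideanSpace.single i.castSucc (1:ℝ) with he
  have helast : ∀ (x : Eucl n) (c : ℝ), (x + c • e) (Fin.last n) = x (Fin.last n) := by
    intro x c
    simp [he, EuclideanSpace.single_apply, (Fin.castSucc_lt_last i).ne']
  have henorm : ‖e‖ = 1 := by simp [he]
  set m : Eucl n → ℝ := fun y => max (diffQuot h e u y - k) 0 with hmdef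
  set ψ : Eucl n → ℝ := fun y => φ y ^ 2 * max (diffQuot h e u y - k) 0 with hψdef
  have hmy : ∀ y, m y = max (diffQuot h e u y - k) 0 := fun _ => rfl
  have hψm : ∀ y, ψ y = φ y ^ 2 * m y := fun y => rfl
  clear_value e m ψ
  have hdq : ∀ x : Eucl n, diffQuot (-h) e ψ x = (ψ x - ψ (x + (-h) • e)) / h := by
    intro x
    simp only [diffQuot]
    rw [div_neg, ← neg_div, neg_sub]
  have hK : ∀ z : Eucl n, dist z x₀ < r → 0 ≤ z (Fin.last n) →
      (z ∈ closedBall (0:Eucl n) 1 ∩ {x : Eucl n | 0 ≤ x (Fin.last n)} ∧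
       z + h • e ∈ closedBall (0:Eucl n) 1 ∩ {x : Eucl n | 0 ≤ x (Fin.last n)}) := by
    intro z hz1 hz2
    have hz1' : ‖z - x₀‖ < r := by rwa [dist_eq_norm] at hz1
    have hz3 : ‖z‖ ≤ ‖x₀‖ + r := by
      have := norm_sub_norm_le z x₀; linarith
    have hz4 : ‖z + h • e‖ ≤ ‖x₀‖ + r + h := by
      have h4 := norm_add_le z (h • e)
      rw [norm_smul, henorm, Real.norm_eq_abs, abs_of_pos hh] at h4
      linarith
    refine ⟨⟨mem_closedBall_zero_iff.mpr (by linarith), hz2⟩,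
      ⟨mem_closedBall_zero_iff.mpr (by linarith), ?_⟩⟩
    show 0 ≤ (z + h • e) (Fin.last n)
    rw [helast]; exact hz2
  have h0K : (0:Eucl n) ∈ closedBall (0:Eucl n) 1 ∩ {x : Eucl n | 0 ≤ x (Fin.last n)} := by
    refine ⟨mem_closedBall_self (by norm_num), ?_⟩
    show (0:ℝ) ≤ (0:Eucl n) (Fin.last n)
    simp
  obtain ⟨Mu, hMudef⟩ : ∃ M : ℝ, M = |u 0| + (Cu:ℝ) := ⟨_, rfl⟩
  have hMu0 : 0 ≤ Mu := by rw [hMudef]; positivity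
  have hubd : ∀ z ∈ closedBall (0:Eucl n) 1 ∩ {x : Eucl n | 0 ≤ x (Fin.last n)},
      |u z| ≤ Mu := by
    intro z hz
    have h4 := hCu.dist_le_mul z hz 0 h0K
    rw [Real.dist_eq, dist_zero_right] at h4
    have h1 : ‖z‖ ≤ 1 := mem_closedBall_zero_iff.mp hz.1
    have h2 : |u z| ≤ |u z - u 0| + |u 0| := by
      simpa using abs_add_le (u z - u 0) (u 0)
    have h3 : (Cu:ℝ) * ‖z‖ ≤ Cu * 1 := mul_le_mul_of_nonneg_left h1 hCu0
    rw [hMudef]; linarith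
  obtain ⟨Mg, hMgdef⟩ : ∃ M : ℝ, M = 2 * Mu / h := ⟨_, rfl⟩
  have hMg0 : 0 ≤ Mg := by rw [hMgdef]; exact div_nonneg (by positivity) hh.le
  have hm0 : ∀ y, 0 ≤ m y := fun y => by rw [hmy]; exact le_max_right _ _
  have hmbd : ∀ y : Eucl n, dist y x₀ < r → 0 ≤ y (Fin.last n) → m y ≤ Mg := by
    intro y h1 h2
    obtain ⟨hyK, hyK'⟩ := hK y h1 h2
    have hDy : |diffQuot h e u y| ≤ Mg := by
      have b1 := hubd _ hyK'
      have b2 := hubd _ hyK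
      simp only [diffQuot]
      rw [abs_div, abs_of_pos hh, hMgdef, div_le_div_iff_of_pos_right hh]
      calc |u (y + h • e) - u y| ≤ |u (y + h • e)| + |u y| := abs_sub _ _
        _ ≤ 2 * Mu := by linarith
    rw [hmy]
    exact max_le (by linarith [le_abs_self (diffQuot h e u y)]) hMg0
  have hmlip : ∀ y z : Eucl n, dist y x₀ < r → 0 ≤ y (Fin.last n) →
      dist z x₀ < r → 0 ≤ z (Fin.last n) →
      |m y - m z| ≤ (2*Cu/h) * dist y z := by
    intro y z hy1 hy2 hz1 hz2
    obtain ⟨hyK, hyK'⟩ := hK y hy1 hy2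
    obtain ⟨hzK, hzK'⟩ := hK z hz1 hz2
    have h1 : |m y - m z| ≤ |(diffQuot h e u y - k) - (diffQuot h e u z - k)| := by
      rw [hmy, hmy]; exact abs_max_sub_max_le_abs _ _ _
    have h2 : (diffQuot h e u y - k) - (diffQuot h e u z - k)
        = ((u (y + h • e) - u (z + h • e)) - (u y - u z))/h := by
      simp only [diffQuot]; ring
    have h3 : dist (y + h • e) (z + h • e) = dist y z := dist_add_right y z (h • e)
    have h4 := hCu.dist_le_mul _ hyK' _ hzK'
    have h5 := hCu.dist_le_mul _ hyK _ hzK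
    rw [Real.dist_eq, h3] at h4
    rw [Real.dist_eq] at h5
    calc |m y - m z| ≤ |(diffQuot h e u y - k) - (diffQuot h e u z - k)| := h1
      _ = |(u (y + h • e) - u (z + h • e)) - (u y - u z)| / h := by
          rw [h2, abs_div, abs_of_pos hh]
      _ ≤ ((Cu:ℝ) * dist y z + Cu * dist y z)/h := by
          rw [div_le_div_iff_of_pos_right hh]
          calc |(u (y + h • e) - u (z + h • e)) - (u y - u z)|
              ≤ |u (y + h • e) - u (z + h • e)| + |u y - u z| := abs_sub _ _
            _ ≤ (Cu:ℝ) * dist y z + Cu * dist y z := add_le_add h4 h5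
      _ = (2*Cu/h) * dist y z := by ring
  have hCuh0 : (0:ℝ) ≤ 2*Cu/h := div_nonneg (by positivity) hh.le
  obtain ⟨Lψ, hLψdef⟩ : ∃ L : ℝ, L = 2*Mφ*Cφ*Mg + Mφ^2*(2*(Cu:ℝ)/h) := ⟨_, rfl⟩
  have hLψ0 : 0 ≤ Lψ := by
    rw [hLψdef]
    have a1 : (0:ℝ) ≤ 2*Mφ*Cφ*Mg :=
      mul_nonneg (mul_nonneg (by linarith) hCφ0) hMg0
    have a2 : (0:ℝ) ≤ Mφ^2*(2*(Cu:ℝ)/h) := mul_nonneg (sq_nonneg _) hCuh0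
    linarith
  have hψkey : ∀ y z : Eucl n, 0 ≤ y (Fin.last n) → 0 ≤ z (Fin.last n) →
      ψ y - ψ z ≤ Lψ * dist y z := by
    intro y z hy hz
    have hd0 : (0:ℝ) ≤ dist y z := dist_nonneg
    by_cases hφy : φ y = 0
    · have h1 : ψ y = 0 := by rw [hψm, hφy]; ring
      have h2 : 0 ≤ ψ z := by rw [hψm]; exact mul_nonneg (sq_nonneg _) (hm0 z)
      linarith [mul_nonneg hLψ0 hd0]
    · obtain ⟨hy1, _⟩ := hφsup y hφy
      have hsq : |φ y^2 - φ z^2| ≤ (2*Mφ*Cφ) * dist y z := by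
        have h1 : |φ y - φ z| ≤ Cφ * dist y z := by
          have := hCφ.dist_le_mul y z; rwa [Real.dist_eq] at this
        have h2 : |φ y + φ z| ≤ 2*Mφ :=
          calc |φ y + φ z| ≤ |φ y| + |φ z| := abs_add_le _ _
            _ ≤ Mφ + Mφ := add_le_add (hφbd y) (hφbd z)
            _ = 2*Mφ := by ring
        calc |φ y^2 - φ z^2| = |(φ y + φ z) * (φ y - φ z)| := by
              rw [show φ y^2 - φ z^2 = (φ y + φ z)*(φ y - φ z) from by ring]
          _ = |φ y + φ z| * |φ y - φ z| := abs_mul _ _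
          _ ≤ (2*Mφ) * (Cφ * dist y z) :=
              mul_le_mul h2 h1 (abs_nonneg _) (by linarith)
          _ = (2*Mφ*Cφ) * dist y z := by ring
      have hfac0 : (0:ℝ) ≤ (2*Mφ*Cφ) * dist y z :=
        mul_nonneg (mul_nonneg (by linarith) hCφ0) hd0
      by_cases hφz : φ z = 0
      · have hψz : ψ z = 0 := by rw [hψm, hφz]; ring
        have h3 : φ y^2 ≤ (2*Mφ*Cφ) * dist y z := by
          have h3' : |φ y^2 - φ z^2| = φ y^2 := by
            rw [hφz]; simp [abs_of_nonneg (sq_nonneg (φ y))]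
          linarith [hsq, h3'.symm.le]
        have h4 : m y ≤ Mg := hmbd y hy1 hy
        have h5 : ψ y ≤ ((2*Mφ*Cφ)*dist y z) * Mg := by
          rw [hψm]
          exact mul_le_mul h3 h4 (hm0 y) hfac0
        have h6 : 0 ≤ Mφ^2*(2*(Cu:ℝ)/h) * dist y z :=
          mul_nonneg (mul_nonneg (sq_nonneg _) hCuh0) hd0
        rw [hψz, sub_zero, hLψdef, add_mul]
        linarith
      · obtain ⟨hz1, _⟩ := hφsup z hφz
        have h4z : m z ≤ Mg := hmbd z hz1 hz
        have h5 : |m y - m z| ≤ (2*Cu/h) * dist y z := hmlip y z hy1 hy hz1 hz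
        have hsq2 : φ y^2 ≤ Mφ^2 := by
          have h1' := abs_le.mp (hφbd y)
          exact sq_le_sq' h1'.1 h1'.2
        have e1 : ψ y - ψ z = φ y^2 * (m y - m z) + (φ y^2 - φ z^2) * m z := by
          rw [hψm, hψm]; ring
        have t1 : φ y^2 * (m y - m z) ≤ Mφ^2 * ((2*(Cu:ℝ)/h) * dist y z) := by
          have a1 : m y - m z ≤ (2*(Cu:ℝ)/h)*dist y z := le_trans (le_abs_self _) h5
          have a2 : φ y^2 * (m y - m z) ≤ φ y^2 * ((2*(Cu:ℝ)/h)*dist y z) :=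
            mul_le_mul_of_nonneg_left a1 (sq_nonneg _)
          have a3 : φ y^2 * ((2*(Cu:ℝ)/h)*dist y z) ≤ Mφ^2 * ((2*(Cu:ℝ)/h)*dist y z) :=
            mul_le_mul_of_nonneg_right hsq2 (mul_nonneg hCuh0 hd0)
          linarith
        have t2 : (φ y^2 - φ z^2) * m z ≤ ((2*Mφ*Cφ)*dist y z) * Mg := by
          have a1 : (φ y^2 - φ z^2) * m z ≤ |φ y^2 - φ z^2| * m z :=
            mul_le_mul_of_nonneg_right (le_abs_self _) (hm0 z)
          have a2 : |φ y^2 - φ z^2| * m z ≤ ((2*Mφ*Cφ)*dist y z) * m z :=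
            mul_le_mul_of_nonneg_right hsq (hm0 z)
          have a3 : ((2*Mφ*Cφ)*dist y z) * m z ≤ ((2*Mφ*Cφ)*dist y z) * Mg :=
            mul_le_mul_of_nonneg_left h4z hfac0
          linarith
        rw [e1, hLψdef, add_mul]
        linarith
  have hψlip : ∀ y z : Eucl n, 0 ≤ y (Fin.last n) → 0 ≤ z (Fin.last n) →
      |ψ y - ψ z| ≤ Lψ * dist y z := by
    intro y z hy hz
    rw [abs_sub_le_iff]
    exact ⟨hψkey y z hy hz, by rw [dist_comm]; exact hψkey z y hz hy⟩
  refine ⟨⟨((Cu:ℝ) + ε/h*(2*Lψ)).toNNReal, ?_⟩, ?_, ?_⟩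
  · -- Lipschitz
    have hεh0 : (0:ℝ) ≤ ε/h := div_nonneg hε.le hh.le
    have hC0 : (0:ℝ) ≤ (Cu:ℝ) + ε/h*(2*Lψ) := by
      have := mul_nonneg hεh0 (by linarith : (0:ℝ) ≤ 2*Lψ)
      linarith
    rw [lipschitzOnWith_iff_dist_le_mul]
    intro x hx y hy
    rw [Real.coe_toNNReal _ hC0]
    have hx2 : 0 ≤ x (Fin.last n) := hx.2
    have hy2 : 0 ≤ y (Fin.last n) := hy.2
    have hwx2 : 0 ≤ (x + (-h) • e) (Fin.last n) := by rw [helast]; exact hx2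
    have hwy2 : 0 ≤ (y + (-h) • e) (Fin.last n) := by rw [helast]; exact hy2
    have h1 : |ψ x - ψ y| ≤ Lψ * dist x y := hψlip x y hx2 hy2
    have h2 : |ψ (x + (-h) • e) - ψ (y + (-h) • e)| ≤ Lψ * dist x y := by
      have := hψlip _ _ hwx2 hwy2
      rwa [dist_add_right] at this
    have h3 : |u x - u y| ≤ (Cu:ℝ) * dist x y := by
      have := hCu.dist_le_mul x hx y hy; rwa [Real.dist_eq] at this
    have h4 : (u x + ε * diffQuot (-h) e ψ x) - (u y + ε * diffQuot (-h) e ψ y)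
        = (u x - u y) + ε/h * ((ψ x - ψ y) - (ψ (x + (-h) • e) - ψ (y + (-h) • e))) := by
      rw [hdq x, hdq y]
      field_simp
      ring
    calc dist (u x + ε * diffQuot (-h) e ψ x) (u y + ε * diffQuot (-h) e ψ y)
        = |(u x + ε * diffQuot (-h) e ψ x) - (u y + ε * diffQuot (-h) e ψ y)| :=
          Real.dist_eq _ _
      _ ≤ |u x - u y| + (ε/h) * (|ψ x - ψ y| + |ψ (x + (-h) • e) - ψ (y + (-h) • e)|) := by
          rw [h4]
          refine (abs_add_le _ _).trans ?_
          have h6 : |ε/h * ((ψ x - ψ y) - (ψ (x + (-h) • e) - ψ (y + (-h) • e)))|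
              ≤ ε/h * (|ψ x - ψ y| + |ψ (x + (-h) • e) - ψ (y + (-h) • e)|) := by
            rw [abs_mul, abs_of_nonneg hεh0]
            exact mul_le_mul_of_nonneg_left (abs_sub _ _) hεh0
          linarith
      _ ≤ (Cu:ℝ) * dist x y + (ε/h) * (Lψ * dist x y + Lψ * dist x y) := by
          have h7 := mul_le_mul_of_nonneg_left (add_le_add h1 h2) hεh0
          linarith
      _ = ((Cu:ℝ) + ε/h*(2*Lψ)) * dist x y := by ring
  · -- boundary values
    intro x hx1 hx2
    have hdx : ∀ w : Eucl n, ‖x₀‖ + r ≤ ‖w‖ → φ w = 0 := by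
      intro w hw
      by_contra hne
      have h1 := (hφsup w hne).1
      rw [dist_eq_norm] at h1
      have h2 := norm_sub_norm_le w x₀
      linarith
    have hφx : φ x = 0 := hdx x (by rw [hx1]; linarith)
    have hφw : φ (x + (-h) • e) = 0 := by
      apply hdx
      have h2 : x + (-h) • e + h • e = x := by
        rw [add_assoc, ← add_smul]
        norm_num
      have h3 := norm_add_le (x + (-h) • e) (h • e)
      rw [h2, norm_smul, henorm, Real.norm_eq_abs, abs_of_pos hh, mul_one] at h3
      rw [hx1] at h3
      linarith
    show u x + ε * diffQuot (-h) e ψ x = g x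
    rw [hdq x]
    have e1 : ψ x = 0 := by rw [hψm, hφx]; ring
    have e2 : ψ (x + (-h) • e) = 0 := by rw [hψm, hφw]; ring
    rw [e1, e2]
    simpa using hug x hx1 hx2
  · -- nonnegativity on the thin ball
    intro x hx
    obtain ⟨hxb, hxl⟩ := hx
    have hux : 0 ≤ u x := hu0 x ⟨hxb, hxl⟩
    show 0 ≤ u x + ε * diffQuot (-h) e ψ x
    rw [hdq x]
    have hψx : 0 ≤ ψ x := by rw [hψm]; exact mul_nonneg (sq_nonneg _) (hm0 x)
    have hwx : (x + (-h) • e) + h • e = x := by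
      rw [add_assoc, ← add_smul]; norm_num
    have hwl : (x + (-h) • e) (Fin.last n) = 0 := by rw [helast]; exact hxl
    by_cases hφw : φ (x + (-h) • e) = 0
    · have hψw : ψ (x + (-h) • e) = 0 := by rw [hψm, hφw]; ring
      rw [hψw, sub_zero]
      have h6 : 0 ≤ ε * (ψ x / h) := mul_nonneg hε.le (div_nonneg hψx hh.le)
      linarith
    · obtain ⟨hw1, _⟩ := hφsup _ hφw
      have hwball : (x + (-h) • e) ∈ ball (0:Eucl n) 1 := by
        rw [mem_ball, dist_zero_right]
        rw [dist_eq_norm] at hw1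
        have h4 := norm_sub_norm_le (x + (-h) • e) x₀
        linarith
      have huw : 0 ≤ u (x + (-h) • e) := hu0 _ ⟨hwball, hwl⟩
      have huxh : 0 ≤ u x / h := div_nonneg hux hh.le
      have hmw : m (x + (-h) • e) ≤ u x / h := by
        rw [hmy]
        apply max_le _ huxh
        have e3 : diffQuot h e u (x + (-h) • e) = (u x - u (x + (-h) • e))/h := by
          simp only [diffQuot]
          rw [hwx]
        rw [e3]
        have h6 : (u x - u (x + (-h) • e))/h ≤ u x / h := by
          rw [div_le_div_iff_of_pos_right hh]
          linarith
        linarith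
      have hψw : ψ (x + (-h) • e) ≤ Mφ^2 * (u x / h) := by
        rw [hψm]
        have h1 : φ (x + (-h) • e)^2 ≤ Mφ^2 := by
          have h1' := abs_le.mp (hφbd (x + (-h) • e))
          exact sq_le_sq' h1'.1 h1'.2
        calc φ (x + (-h) • e)^2 * m (x + (-h) • e)
            ≤ φ (x + (-h) • e)^2 * (u x / h) :=
              mul_le_mul_of_nonneg_left hmw (sq_nonneg _)
          _ ≤ Mφ^2 * (u x / h) := mul_le_mul_of_nonneg_right h1 huxh
      have hεb : ε * Mφ^2 ≤ h^2 := by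
        have h1 := (lt_div_iff₀ (by positivity : (0:ℝ) < Mφ^2+1)).mp hεlt
        have h2 : ε * (Mφ^2+1) = ε * Mφ^2 + ε := by ring
        linarith
      have h5 : ε * ψ (x + (-h) • e) ≤ u x * h := by
        calc ε * ψ (x + (-h) • e) ≤ ε * (Mφ^2 * (u x / h)) :=
              mul_le_mul_of_nonneg_left hψw hε.le
          _ = (ε * Mφ^2) * (u x/h) := by ring
          _ ≤ h^2 * (u x / h) := mul_le_mul_of_nonneg_right hεb huxh
          _ = u x * h := by field_simp
      have h7 : -(u x) ≤ (ε * ψ x - ε * ψ (x + (-h) • e))/h := by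
        rw [le_div_iff₀ hh]
        linarith only [mul_nonneg hε.le hψx, h5]
      have h8 : ε * ((ψ x - ψ (x + (-h) • e))/h)
          = (ε * ψ x - ε * ψ (x + (-h) • e))/h := by ring
      rw [h8]
      linarith only [h7, hux]
end
end
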